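/- Let X be a real random variable with E|X| < ∞ whose distribution is atomless, and let α > 0. Then the function λ(t) = E ψ_α(X − t) is differentiable on ℝ with derivative λ'(t) = −P(|X − t| ≤ α) for every t ∈ ℝ. -/

import Mathlib

open MeasureTheory Filter

/-- The Huber score function: `ψ_α(x) = x` if `|x| ≤ α`, and `α · sign(x)` otherwise. -/
noncomputable def huberScore (α x : ℝ) : ℝ := if |x| ≤ α then x else α * Real.sign x

/-!
For `α ≥ 0` the Huber score is the clamp `x ↦ min α (max (-α) x)`: a bounded 1-Lipschitz
function with derivative `1` on `(-α, α)` and `0` off `[-α, α]`. Differentiating under the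
integral sign, with the Lipschitz constant as dominating function, gives
`λ'(t) = -E[1{|X - t| ≤ α}]`; the kinks `X - t = ±α` have probability zero because the law of
`X` is atomless.
-/

section HuberScore

variable {α : ℝ}

lemma huberScore_eq_clamp (hα : 0 ≤ α) (x : ℝ) : huberScore α x = min α (max (-α) x) := by
  unfold huberScore
  split_ifs with h
  · rw [abs_le] at h
    rw [max_eq_right h.1, min_eq_right h.2]
  · rcases lt_abs.mp (not_le.mp h) with hx | hx
    · rw [Real.sign_of_pos (hα.trans_lt hx), max_eq_right (by linarith), min_eq_left hx.le,
        mul_one]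
    · rw [Real.sign_of_neg (by linarith), max_eq_left (by linarith), min_eq_right (by linarith),
        mul_neg_one]

lemma lipschitzWith_huberScore (hα : 0 ≤ α) : LipschitzWith 1 (huberScore α) := by
  rw [show huberScore α = fun x => min α (max (-α) x) from funext (huberScore_eq_clamp hα)]
  exact (LipschitzWith.id.const_max (-α)).const_min α

lemma abs_huberScore_le (hα : 0 ≤ α) (x : ℝ) : |huberScore α x| ≤ α := by
  rw [huberScore_eq_clamp hα, abs_le]
  exact ⟨le_min (by linarith) (le_max_left _ _), min_le_left _ _⟩

lemma hasDerivAt_huberScore (hα : 0 ≤ α) {y : ℝ} (hy : |y| ≠ α) :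
    HasDerivAt (huberScore α) (if |y| ≤ α then 1 else 0) y := by
  rcases hy.lt_or_gt with hlt | hgt
  · rw [if_pos hlt.le]
    refine (hasDerivAt_id y).congr_of_eventuallyEq ?_
    filter_upwards [(continuous_abs.tendsto y).eventually_lt_const hlt] with z hz
    exact if_pos hz.le
  · rw [if_neg hgt.not_ge]
    rcases lt_abs.mp hgt with hy | hy
    · refine (hasDerivAt_const y α).congr_of_eventuallyEq ?_
      filter_upwards [eventually_gt_nhds hy] with z hz
      rw [huberScore_eq_clamp hα, max_eq_right (by linarith), min_eq_left hz.le]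
    · refine (hasDerivAt_const y (-α)).congr_of_eventuallyEq ?_
      filter_upwards [eventually_lt_nhds (lt_neg.mp hy)] with z hz
      rw [huberScore_eq_clamp hα, max_eq_left hz.le, min_eq_right (by linarith)]

end HuberScore

section IntegralCompSub

variable {Ω : Type*} [MeasurableSpace Ω] {μ : Measure Ω} {X : Ω → ℝ}

theorem hasDerivAt_integral_comp_sub [IsFiniteMeasure μ] {f f' : ℝ → ℝ} {K : NNReal}
    (hf : LipschitzWith K f) (hf' : Measurable f') (hX : Measurable X) {t : ℝ}
    (hf_int : Integrable (fun ω => f (X ω - t)) μ)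
    (hf_deriv : ∀ᵐ ω ∂μ, HasDerivAt f (f' (X ω - t)) (X ω - t)) :
    HasDerivAt (fun s => ∫ ω, f (X ω - s) ∂μ) (-∫ ω, f' (X ω - t) ∂μ) t := by
  have h_lip : ∀ ω, LipschitzOnWith (Real.nnabs K) (fun s => f (X ω - s)) Set.univ := by
    intro ω
    rw [Real.nnabs_coe, ← mul_one K]
    exact (hf.comp (IsometryEquiv.subLeft (X ω)).isometry.lipschitz).lipschitzOnWith
  have h_meas : ∀ s, AEStronglyMeasurable (fun ω => f (X ω - s)) μ := fun s =>
    (hf.continuous.measurable.comp (hX.sub_const s)).aestronglyMeasurable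
  have h_deriv : ∀ᵐ ω ∂μ, HasDerivAt (fun s => f (X ω - s)) (-f' (X ω - t)) t :=
    hf_deriv.mono fun ω h => by
      simpa [Function.comp_def] using h.comp t ((hasDerivAt_id t).const_sub (X ω))
  rw [← integral_neg]
  exact (hasDerivAt_integral_of_dominated_loc_of_lip (bound := fun _ => (K : ℝ)) univ_mem
    (Eventually.of_forall h_meas) hf_int (hf'.comp (hX.sub_const t)).neg.aestronglyMeasurable
    (ae_of_all _ h_lip) (integrable_const _) h_deriv).2

lemma ae_abs_sub_ne (hX : ∀ c, μ {ω | X ω = c} = 0) (t α : ℝ) :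
    ∀ᵐ ω ∂μ, |X ω - t| ≠ α := by
  refine measure_mono_null (fun ω (h : ¬|X ω - t| ≠ α) => ?_)
    (measure_union_null (hX (t + α)) (hX (t - α)))
  rcases eq_or_eq_neg_of_abs_eq (not_not.mp h) with h | h
  · exact Or.inl (show X ω = t + α by linarith)
  · exact Or.inr (show X ω = t - α by linarith)

end IntegralCompSub

theorem huber_mean_hasDerivAt_general {Ω : Type*} [MeasureSpace Ω]
    [IsProbabilityMeasure (volume : Measure Ω)]
    (X : Ω → ℝ) (hXmeas : Measurable X)
    (hatomless : ∀ c : ℝ, volume {ω | X ω = c} = 0)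
    (α : ℝ) (hα : 0 < α) (t : ℝ) :
    HasDerivAt (fun s => ∫ ω, huberScore α (X ω - s))
      (-(volume {ω | |X ω - t| ≤ α}).toReal) t := by
  have hS : MeasurableSet {ω | |X ω - t| ≤ α} :=
    measurableSet_le (hXmeas.sub_const t).abs measurable_const
  have h_int : Integrable (fun ω => huberScore α (X ω - t)) :=
    .of_bound ((lipschitzWith_huberScore hα.le).continuous.measurable.comp
      (hXmeas.sub_const t)).aestronglyMeasurable α
      (ae_of_all _ fun ω => abs_huberScore_le hα.le _)
  have h_deriv := hasDerivAt_integral_comp_sub (lipschitzWith_huberScore hα.le)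
    (measurable_const.ite (measurableSet_le measurable_abs measurable_const) measurable_const)
    hXmeas h_int ((ae_abs_sub_ne hatomless t α).mono fun ω => hasDerivAt_huberScore hα.le)
  convert h_deriv using 2
  rw [← Measure.real_def, ← integral_indicator_one hS]
  simp only [Set.indicator_apply, Set.mem_ofPred_eq, Pi.one_apply]

/-- If `E|X| < ∞` and the law of `X` is atomless, then
`λ(t) = E ψ_α(X − t)` is differentiable with `λ'(t) = −P(|X − t| ≤ α)`. -/
theorem huber_mean_hasDerivAt {Ω : Type*} [MeasureSpace Ω]
    [IsProbabilityMeasure (volume : Measure Ω)]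
    (X : Ω → ℝ) (hXmeas : Measurable X) (hXint : Integrable X)
    (hatomless : ∀ c : ℝ, volume {ω | X ω = c} = 0)
    (α : ℝ) (hα : 0 < α) (t : ℝ) :
    HasDerivAt (fun s => ∫ ω, huberScore α (X ω - s))
      (-(volume {ω | |X ω - t| ≤ α}).toReal) t :=
  huber_mean_hasDerivAt_general X hXmeas hatomless α hα t
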